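/- arXiv:2507.10419 — 2 statements merged into one kernel-verified Lean document; each statement's English description precedes it below -/
import Mathlib

section
/- If the mixture components have pairwise disjoint supports, then the Winner-Takes-All loss at the true components equals the conditional entropy: -∑_x p(x) max_k log p_k(x) = ∑_k w_k H(p_k), where p = ∑_k w_k p_k. -/
open Finset Real

/-- With pairwise disjoint supports, the Winner-Takes-All loss at the true
components equals the conditional entropy `∑ₖ wₖ H(pₖ)`. Here for `x` in the
support of `p` the winning value `maxₖ log pₖ(x)` equals `log (maxₖ pₖ(x))`
(the max over the components positive at `x`), and terms with `p x = 0`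
contribute `0` to the sum. -/
theorem wta_loss_eq_conditional_entropy_of_disjoint {X : Type*} [Fintype X]
    {K : ℕ} [NeZero K]
    (w : Fin K → ℝ) (hw0 : ∀ k, 0 < w k) (hw1 : ∑ k, w k = 1)
    (pk : Fin K → X → ℝ)
    (hpk0 : ∀ k x, 0 ≤ pk k x) (hpk1 : ∀ k, ∑ x, pk k x = 1)
    (hdisj : ∀ k s, k ≠ s → ∀ x, 0 < pk k x → pk s x = 0)
    (p : X → ℝ) (hp : ∀ x, p x = ∑ k, w k * pk k x) :
    (-∑ x, p x * Real.log (Finset.univ.sup' Finset.univ_nonempty (fun k => pk k x))) =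
      ∑ k, w k * (-∑ x, pk k x * Real.log (pk k x)) := by
  have : ∑ k, w k * (-∑ x, pk k x * Real.log (pk k x))
      = -∑ x, ∑ k, w k * (pk k x * Real.log (pk k x)) := by
    simp only [mul_neg, Finset.mul_sum, ← Finset.sum_neg_distrib]
    exact Finset.sum_comm
  rw [this, neg_inj]
  congr 1; ext x
  by_cases h : ∃ k, 0 < pk k x
  · obtain ⟨k0, hk0⟩ := h
    have hzero : ∀ s, s ≠ k0 → pk s x = 0 := fun s hs =>
      hdisj k0 s (fun h => hs h.symm) x hk0
    have hsup : (Finset.univ.sup' Finset.univ_nonempty (fun k => pk k x)) = pk k0 x := by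
      apply le_antisymm
      · apply Finset.sup'_le
        intro s _
        by_cases hs : s = k0
        · subst hs; exact le_refl _
        · rw [hzero s hs]; exact le_of_lt hk0
      · exact Finset.le_sup' (fun k => pk k x) (Finset.mem_univ k0)
    have hpx : p x = w k0 * pk k0 x := by
      rw [hp x]
      rw [Finset.sum_eq_single k0]
      · intro s _ hs; rw [hzero s hs, mul_zero]
      · intro h; exact absurd (Finset.mem_univ k0) h
    rw [hsup, hpx]
    rw [Finset.sum_eq_single k0]
    · ring
    · intro s _ hs; rw [hzero s hs]; ring
    · intro h; exact absurd (Finset.mem_univ k0) h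
  · push_neg at h
    have hz : ∀ k, pk k x = 0 := fun k => le_antisymm (h k) (hpk0 k x)
    have hpx : p x = 0 := by
      rw [hp x]; apply Finset.sum_eq_zero; intro k _; rw [hz k, mul_zero]
    rw [hpx, zero_mul]
    symm; apply Finset.sum_eq_zero; intro k _; rw [hz k]; ring
end

section
/- For a uniform mixture p = (1/K)∑_k p_k of distributions on a finite set, the combined chain of inequalities holds: H(p) - log K ≤ inf over (q_1,…,q_K) of L^WTA(q_1,…,q_K) ≤ ∑_k (1/K) H(p_k) ≤ H(p), where L^WTA(q_1,…,q_K) = -∑_x p(x) max_k log q_k(x), provided the components p_k have pairwise disjoint supports for the middle upper bound, and all relevant probabilities are positive where needed. -/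
open Finset Real

/-- Full chain of inequalities for a uniform mixture `p = (1/K) ∑ₖ pₖ` with
pairwise disjoint component supports:
`H(p) - log K ≤ inf L^WTA ≤ ∑ₖ (1/K) H(pₖ) ≤ H(p)`, where the WTA loss of a
tuple `(q₁,…,q_K)` is `-∑ₓ p(x) maxₖ log qₖ(x) = -∑ₓ p(x) log (maxₖ qₖ(x))`. -/
theorem wta_chain_of_inequalities {X : Type*} [Fintype X] {K : ℕ} [NeZero K]
    (pk : Fin K → X → ℝ)
    (hpk0 : ∀ k x, 0 ≤ pk k x) (hpk1 : ∀ k, ∑ x, pk k x = 1)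
    (hdisj : ∀ k s, k ≠ s → ∀ x, 0 < pk k x → pk s x = 0)
    (p : X → ℝ) (hp : ∀ x, p x = (1 / (K : ℝ)) * ∑ k, pk k x) :
    (∀ q : Fin K → X → ℝ, (∀ k x, 0 ≤ q k x) → (∀ k, ∑ x, q k x = 1) →
      (∀ x, 0 < p x →
        0 < Finset.univ.sup' Finset.univ_nonempty (fun k => q k x)) →
      (-∑ x, p x * Real.log (p x)) - Real.log K ≤
        -∑ x, p x * Real.log
          (Finset.univ.sup' Finset.univ_nonempty (fun k => q k x))) ∧
    ((-∑ x, p x * Real.log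
        (Finset.univ.sup' Finset.univ_nonempty (fun k => pk k x))) ≤
      ∑ k, (1 / (K : ℝ)) * (-∑ x, pk k x * Real.log (pk k x))) ∧
    (∑ k, (1 / (K : ℝ)) * (-∑ x, pk k x * Real.log (pk k x)) ≤
      -∑ x, p x * Real.log (p x)) := by
  have hK0 : (0 : ℝ) < K := by
    exact_mod_cast Nat.pos_of_ne_zero (NeZero.ne K)
  have hK1 : (1 : ℝ) ≤ K := by
    exact_mod_cast Nat.one_le_iff_ne_zero.mpr (NeZero.ne K)
  have hp0 : ∀ x, 0 ≤ p x := by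
    intro x
    rw [hp]
    exact mul_nonneg (by positivity) (Finset.sum_nonneg fun k _ => hpk0 k x)
  have hpsum : ∑ x, p x = 1 := by
    simp_rw [hp, ← Finset.mul_sum]
    rw [Finset.sum_comm]
    simp [hpk1]
  have swap : ∀ f : Fin K → X → ℝ,
      ∑ k, (1 / (K : ℝ)) * (-∑ x, f k x) = -∑ x, (1 / (K : ℝ)) * ∑ k, f k x := by
    intro f
    simp_rw [mul_neg]
    rw [Finset.sum_neg_distrib]
    congr 1
    simp_rw [← Finset.mul_sum]
    rw [Finset.sum_comm]
  refine ⟨?_, ?_, ?_⟩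
  · -- Part 1
    intro q hq0 hq1 hqpos
    set M : X → ℝ := fun x => Finset.univ.sup' Finset.univ_nonempty (fun k => q k x) with hM
    have hM0 : ∀ x, 0 ≤ M x := by
      intro x
      exact le_trans (hq0 (Classical.arbitrary (Fin K)) x)
        (Finset.le_sup' (fun k => q k x) (Finset.mem_univ _))
    have hMsum : ∑ x, M x ≤ K := by
      calc ∑ x, M x ≤ ∑ x, ∑ k, q k x := by
            apply Finset.sum_le_sum
            intro x _
            apply Finset.sup'_le
            intro k _
            exact Finset.single_le_sum (fun s _ => hq0 s x) (Finset.mem_univ k)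
        _ = ∑ k : Fin K, ∑ x, q k x := Finset.sum_comm
        _ = K := by simp [hq1]
    have key : ∀ x, p x * Real.log (M x) - p x * Real.log (p x) ≤
        M x / K - p x + p x * Real.log K := by
      intro x
      rcases eq_or_lt_of_le (hp0 x) with h | h
      · rw [← h]
        simp
        exact div_nonneg (hM0 x) (le_of_lt hK0)
      · have hMx : 0 < M x := hqpos x h
        have hz : 0 < M x / (K * p x) := by positivity
        have hlog := Real.log_le_sub_one_of_pos hz
        rw [Real.log_div (ne_of_gt hMx) (by positivity),
          Real.log_mul (ne_of_gt hK0) (ne_of_gt h)] at hlog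
        have h2 := mul_le_mul_of_nonneg_left hlog (le_of_lt h)
        have heq : p x * (M x / (K * p x) - 1) = M x / K - p x := by
          field_simp
        nlinarith [h2]
    have hsum : ∑ x, (p x * Real.log (M x) - p x * Real.log (p x)) ≤
        ∑ x, (M x / (K : ℝ) - p x + p x * Real.log (K : ℝ)) :=
      Finset.sum_le_sum (fun x _ => key x)
    rw [Finset.sum_sub_distrib] at hsum
    have hrhs : ∑ x, (M x / (K : ℝ) - p x + p x * Real.log K) ≤ Real.log K := by
      rw [Finset.sum_add_distrib, Finset.sum_sub_distrib, ← Finset.sum_div,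
        ← Finset.sum_mul, hpsum]
      have : (∑ x, M x) / (K : ℝ) ≤ 1 := by
        rw [div_le_one hK0]; exact hMsum
      linarith
    linarith
  · -- Part 2
    have hMeq : ∀ x (k : Fin K), pk k x *
        Real.log (Finset.univ.sup' Finset.univ_nonempty (fun k => pk k x)) =
        pk k x * Real.log (pk k x) := by
      intro x k
      rcases eq_or_lt_of_le (hpk0 k x) with h | h
      · rw [← h]; ring
      · congr 2
        apply le_antisymm
        · apply Finset.sup'_le
          intro s _
          rcases eq_or_ne s k with rfl | hs
          · exact le_refl _
          · rw [hdisj k s (Ne.symm hs) x h]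
            exact le_of_lt h
        · exact Finset.le_sup' (fun s => pk s x) (Finset.mem_univ k)
    apply le_of_eq
    rw [swap (fun k x => pk k x * Real.log (pk k x))]
    congr 1
    apply Finset.sum_congr rfl
    intro x _
    rw [hp, mul_assoc, Finset.sum_mul]
    congr 1
    exact Finset.sum_congr rfl fun k _ => hMeq x k
  · -- Part 3
    have hterm : ∀ (k : Fin K) x, pk k x * Real.log (p x) ≤
        pk k x * Real.log (pk k x) := by
      intro k x
      rcases eq_or_lt_of_le (hpk0 k x) with h | h
      · rw [← h]; simp
      · have hsum : ∑ s, pk s x = pk k x := by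
          apply Finset.sum_eq_single k
          · intro s _ hs
            exact hdisj k s (Ne.symm hs) x h
          · simp
        have hpx : p x = (1 / (K : ℝ)) * pk k x := by rw [hp, hsum]
        have hpxpos : 0 < p x := by rw [hpx]; positivity
        have h1K : 1 / (K : ℝ) ≤ 1 := by
          rw [div_le_one hK0]; exact hK1
        have hle : p x ≤ pk k x := by
          rw [hpx]
          nlinarith [mul_le_mul_of_nonneg_right h1K (le_of_lt h)]
        exact mul_le_mul_of_nonneg_left (Real.log_le_log hpxpos hle) (le_of_lt h)
    rw [swap (fun k x => pk k x * Real.log (pk k x))]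
    apply neg_le_neg
    apply Finset.sum_le_sum
    intro x _
    nth_rewrite 1 [hp x]
    rw [mul_assoc, Finset.sum_mul]
    apply mul_le_mul_of_nonneg_left _ (by positivity)
    exact Finset.sum_le_sum fun k _ => hterm k x
end
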